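/- Define Ψ_I(z) = ψ(1-z) + ψ(1+z) - ψ(1 - z/2) - ψ(1 + z/2), where ψ is the digamma function. Then for all z ∈ [0, 1), Ψ_I(z) ≤ 0, and Ψ_I is (weakly) decreasing on [0,1). -/

import Mathlib

/-!
Iterating `ψ(x + 1) = ψ(x) + 1/x` writes `Ψ_I(z)` as the partial sum up to `N` of
`1/(m - z/2) + 1/(m + z/2) - 1/(m - z) - 1/(m + z) = -6 m z² / ((4m² - z²)(m² - z²))`
plus a combination of values `ψ(N + a)` with `a ∈ [0, 2]`. Since `log Γ` is convex, `ψ` is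
monotone, so `ψ(N) ≤ ψ(N + a) ≤ ψ(N + 2) = ψ(N) + 1/N + 1/(N + 1)` and the remainder tends to `0`.
Each summand is nonpositive and decreasing in `z ∈ [0, m)`, and both properties pass to the limit.
-/

noncomputable def digamma (x : ℝ) : ℝ := deriv (fun y => Real.log (Real.Gamma y)) x

noncomputable def PsiI (z : ℝ) : ℝ :=
  digamma (1 - z) + digamma (1 + z) - digamma (1 - z / 2) - digamma (1 + z / 2)

open Real Filter Topology Finset

lemma differentiableAt_log_Gamma {x : ℝ} (hx : 0 < x) :
    DifferentiableAt ℝ (fun y => log (Gamma y)) x :=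
  (differentiableAt_Gamma fun m => by linarith [(m.cast_nonneg : (0 : ℝ) ≤ m)]).log
    (Gamma_pos_of_pos hx).ne'

lemma digamma_add_one {x : ℝ} (hx : 0 < x) : digamma (x + 1) = digamma x + 1 / x := by
  have hfeq : (fun y => log (Gamma (y + 1))) =ᶠ[𝓝 x] fun y => log (Gamma y) + log y := by
    filter_upwards [Ioi_mem_nhds hx] with y hy
    rw [Gamma_add_one (ne_of_gt hy), log_mul (ne_of_gt hy) (Gamma_pos_of_pos hy).ne', add_comm]
  have hshift : deriv (fun y => log (Gamma (y + 1))) x = digamma (x + 1) :=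
    deriv_comp_add_const (f := fun y => log (Gamma y)) (a := 1) (x := x)
  have hsum : HasDerivAt (fun y => log (Gamma y) + log y) (digamma x + x⁻¹) x :=
    (differentiableAt_log_Gamma hx).hasDerivAt.add (hasDerivAt_log hx.ne')
  rw [← hshift, hfeq.deriv_eq, hsum.deriv, one_div]

lemma digamma_add_nat {x : ℝ} (hx : 0 < x) (N : ℕ) :
    digamma (x + N) = digamma x + ∑ k ∈ range N, 1 / (x + k) := by
  induction N with
  | zero => simp
  | succ N ih =>
    rw [Nat.cast_succ, ← add_assoc, digamma_add_one (by positivity), ih, sum_range_succ, add_assoc]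

lemma monotoneOn_digamma : MonotoneOn digamma (Set.Ioi 0) :=
  convexOn_log_Gamma.monotoneOn_deriv fun _ hx => differentiableAt_log_Gamma hx

lemma tendsto_digamma_add_sub_digamma {a : ℝ} (ha : a ∈ Set.Icc (0 : ℝ) 2) :
    Tendsto (fun x => digamma (x + a) - digamma x) atTop (𝓝 0) := by
  have hbound : ∀ᶠ x in atTop, 0 ≤ digamma (x + a) - digamma x ∧
      digamma (x + a) - digamma x ≤ 2 / x := by
    filter_upwards [eventually_gt_atTop 0] with x hx
    have h2 : digamma (x + 2) = digamma x + (1 / x + 1 / (x + 1)) := by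
      simpa [sum_range_succ] using digamma_add_nat hx 2
    have hlow := monotoneOn_digamma hx (show x + a ∈ Set.Ioi 0 by simp; linarith [ha.1])
      (by linarith [ha.1])
    have hup := monotoneOn_digamma (show x + a ∈ Set.Ioi 0 by simp; linarith [ha.1])
      (show x + 2 ∈ Set.Ioi 0 by simp; linarith) (by linarith [ha.2])
    have : 1 / (x + 1) ≤ 1 / x := one_div_le_one_div_of_le hx (by linarith)
    have : 2 / x = 1 / x + 1 / x := by ring
    constructor <;> linarith
  refine tendsto_of_tendsto_of_tendsto_of_le_of_le' tendsto_const_nhds ?_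
    (hbound.mono fun _ h => h.1) (hbound.mono fun _ h => h.2)
  simpa using tendsto_const_nhds.div_atTop tendsto_id

noncomputable def psiITerm (m z : ℝ) : ℝ :=
  1 / (m - z / 2) + 1 / (m + z / 2) - 1 / (m - z) - 1 / (m + z)

lemma psiITerm_eq {m z : ℝ} (hz : 0 ≤ z) (hzm : z < m) :
    psiITerm m z = -6 * m * (z ^ 2 / ((4 * m ^ 2 - z ^ 2) * (m ^ 2 - z ^ 2))) := by
  have h1 : 2 * m - z ≠ 0 := by linarith
  have h2 : 2 * m + z ≠ 0 := by linarith
  have h3 : m - z ≠ 0 := by linarith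
  have h4 : m + z ≠ 0 := by linarith
  rw [psiITerm, show 4 * m ^ 2 - z ^ 2 = (2 * m - z) * (2 * m + z) by ring,
    show m ^ 2 - z ^ 2 = (m - z) * (m + z) by ring,
    show m - z / 2 = (2 * m - z) / 2 by ring, show m + z / 2 = (2 * m + z) / 2 by ring]
  field_simp
  ring

lemma antitoneOn_psiITerm (m : ℝ) : AntitoneOn (psiITerm m) (Set.Ico 0 m) := by
  rintro a ⟨ha, ham⟩ b ⟨hb, hbm⟩ hab
  rw [psiITerm_eq ha ham, psiITerm_eq hb hbm]
  have hm : 0 < m := by linarith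
  have hfrac : a ^ 2 / ((4 * m ^ 2 - a ^ 2) * (m ^ 2 - a ^ 2))
      ≤ b ^ 2 / ((4 * m ^ 2 - b ^ 2) * (m ^ 2 - b ^ 2)) := by
    apply div_le_div₀ (by positivity) (by nlinarith) (mul_pos (by nlinarith) (by nlinarith))
    gcongr <;> nlinarith
  nlinarith

lemma psiITerm_nonpos {m z : ℝ} (hz : 0 ≤ z) (hzm : z < m) : psiITerm m z ≤ 0 := by
  have h0 : psiITerm m 0 = 0 := by simp [psiITerm]
  exact h0 ▸ antitoneOn_psiITerm m ⟨le_rfl, hz.trans_lt hzm⟩ ⟨hz, hzm⟩ hz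

lemma sum_psiITerm_eq {z : ℝ} (hz : z ∈ Set.Ico (0 : ℝ) 1) (N : ℕ) :
    ∑ k ∈ range N, psiITerm (k + 1) z = PsiI z -
      (digamma ((1 - z) + N) + digamma ((1 + z) + N)
        - digamma ((1 - z / 2) + N) - digamma ((1 + z / 2) + N)) := by
  obtain ⟨hz0, hz1⟩ := hz
  rw [digamma_add_nat (by linarith), digamma_add_nat (by linarith), digamma_add_nat (by linarith),
    digamma_add_nat (by linarith), PsiI]
  have hterm : ∀ k ∈ range N, psiITerm (k + 1) z = 1 / (1 - z / 2 + k) + 1 / (1 + z / 2 + k)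
      - 1 / (1 - z + k) - 1 / (1 + z + k) := by
    intro k _
    unfold psiITerm
    ring_nf
  rw [sum_congr rfl hterm, sum_sub_distrib, sum_sub_distrib, sum_add_distrib]
  ring

lemma tendsto_sum_psiITerm {z : ℝ} (hz : z ∈ Set.Ico (0 : ℝ) 1) :
    Tendsto (fun N : ℕ => ∑ k ∈ range N, psiITerm (k + 1) z) atTop (𝓝 (PsiI z)) := by
  obtain ⟨hz0, hz1⟩ := hz
  have hshift {a : ℝ} (ha : a ∈ Set.Icc (0 : ℝ) 2) :
      Tendsto (fun N : ℕ => digamma (N + a) - digamma N) atTop (𝓝 0) :=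
    (tendsto_digamma_add_sub_digamma ha).comp tendsto_natCast_atTop_atTop
  have hrem := (((hshift (a := 1 - z) ⟨by linarith, by linarith⟩).add
    (hshift (a := 1 + z) ⟨by linarith, by linarith⟩)).sub
    (hshift (a := 1 - z / 2) ⟨by linarith, by linarith⟩)).sub
    (hshift (a := 1 + z / 2) ⟨by linarith, by linarith⟩)
  have hlim := tendsto_const_nhds (x := PsiI z) |>.sub hrem
  rw [add_zero, sub_zero, sub_zero, sub_zero] at hlim
  refine hlim.congr fun N => ?_
  rw [sum_psiITerm_eq ⟨hz0, hz1⟩ N]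
  simp only [add_comm _ (N : ℝ)]
  ring

theorem PsiI_nonpos_and_decreasing :
    (∀ z ∈ Set.Ico (0 : ℝ) 1, PsiI z ≤ 0) ∧ AntitoneOn PsiI (Set.Ico (0 : ℝ) 1) := by
  have mem_Ico_succ {z : ℝ} (hz : z ∈ Set.Ico (0 : ℝ) 1) (k : ℕ) :
      z ∈ Set.Ico (0 : ℝ) (k + 1) :=
    ⟨hz.1, hz.2.trans_le (by simp)⟩
  refine ⟨fun z hz => ?_, fun a ha b hb hab => ?_⟩
  · exact le_of_tendsto' (tendsto_sum_psiITerm hz)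
      fun N => sum_nonpos fun k _ => psiITerm_nonpos (mem_Ico_succ hz k).1 (mem_Ico_succ hz k).2
  · exact le_of_tendsto_of_tendsto' (tendsto_sum_psiITerm hb) (tendsto_sum_psiITerm ha)
      fun N => sum_le_sum fun k _ =>
        antitoneOn_psiITerm _ (mem_Ico_succ ha k) (mem_Ico_succ hb k) hab
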